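/- arXiv:2208.05936 — 6 statements merged into one kernel-verified Lean document; each statement's English description precedes it below -/
import Mathlib

section
/- Fourier slice theorem: For every Schwartz function f on ℝ², every unit vector ω ∈ S¹ and every q ∈ ℝ, the one-dimensional Fourier transform in the affine parameter p of the Radon transform of f satisfies ∫_ℝ e^{−i q p} ℛf(ω,p) dp = 𝓕f(qω). -/
/-! In the orthonormal frame `(ω, ω^⊥)` Lebesgue measure on `ℝ²` is the product of the Lebesgue
measures in the coordinates `x = p ω + t ω^⊥`, and the phase `x · qω = qp` does not depend on `t`.
Fubini therefore turns `𝓕f(qω)` into the Fourier transform in `p` of the line integrals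
`ℛf(ω, p)`. -/

open MeasureTheory Real intervalIntegral
open scoped RealInnerProductSpace

noncomputable section

/-- The plane `ℝ²` as a Euclidean space. -/
abbrev E2 : Type := EuclideanSpace ℝ (Fin 2)

/-- The unit vector `ω(φ) = (cos φ, sin φ)`. -/
def omega (φ : ℝ) : E2 := (WithLp.equiv 2 (Fin 2 → ℝ)).symm ![Real.cos φ, Real.sin φ]

/-- The rotation of `w` by `π/2`: `w^⊥ = (−w₂, w₁)`. -/
def perp (w : E2) : E2 := (WithLp.equiv 2 (Fin 2 → ℝ)).symm ![-(w 1), w 0]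

/-- The Fourier transform on `ℝ²`: `𝓕f(ξ) = ∫ e^{−i x·ξ} f(x) dx`. -/
def FT (f : E2 → ℂ) (ξ : E2) : ℂ :=
  ∫ x : E2, Complex.exp (-(Complex.I * (⟪x, ξ⟫ : ℂ))) * f x

/-- The Radon transform `ℛf(ω,p) = ∫ f(p ω + t ω^⊥) dt`. -/
def Radon (f : E2 → ℂ) (w : E2) (p : ℝ) : ℂ :=
  ∫ t : ℝ, f (p • w + t • perp w)


theorem inner_perp_self_left (w : E2) : ⟪perp w, w⟫ = 0 := by
  simp only [perp, PiLp.inner_apply, RCLike.inner_apply, conj_trivial, WithLp.equiv_symm_apply,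
    Fin.sum_univ_two, Matrix.cons_val_zero, Matrix.cons_val_one]
  ring

theorem norm_perp (w : E2) : ‖perp w‖ = ‖w‖ := by
  simp only [EuclideanSpace.norm_eq, perp, WithLp.equiv_symm_apply, Fin.sum_univ_two,
    Matrix.cons_val_zero, Matrix.cons_val_one, Real.norm_eq_abs, sq_abs, neg_sq, add_comm]

theorem orthonormal_perp {w : E2} (hw : ‖w‖ = 1) : Orthonormal ℝ ![w, perp w] := by
  rw [orthonormal_iff_ite]
  intro i j
  fin_cases i <;> fin_cases j <;>
    simp [norm_perp, hw, inner_perp_self_left, real_inner_comm (perp w) w]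

theorem inner_smul_add_smul_perp_smul {w : E2} (hw : ‖w‖ = 1) (p t q : ℝ) :
    ⟪p • w + t • perp w, q • w⟫ = q * p := by
  rw [inner_add_left, real_inner_smul_left, real_inner_smul_left, real_inner_smul_right,
    real_inner_smul_right, real_inner_self_eq_norm_sq, hw, inner_perp_self_left]
  ring

section Integration

variable {E G : Type*} [NormedAddCommGroup E] [InnerProductSpace ℝ E] [FiniteDimensional ℝ E]
  [MeasurableSpace E] [BorelSpace E] [NormedAddCommGroup G] [NormedSpace ℝ G]

theorem OrthonormalBasis.integral_eq_integral_integral (b : OrthonormalBasis (Fin 2) ℝ E)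
    {g : E → G} (hg : Integrable g) :
    ∫ x, g x = ∫ p : ℝ, ∫ t : ℝ, g (p • b 0 + t • b 1) := by
  let Φ : ℝ × ℝ ≃ᵐ E := (MeasurableEquiv.finTwoArrow.symm.trans
    (MeasurableEquiv.toLp 2 (Fin 2 → ℝ))).trans b.measurableEquiv.symm
  have hΦ : MeasurePreserving Φ :=
    (b.measurePreserving_measurableEquiv.symm.comp
      (EuclideanSpace.volume_preserving_symm_measurableEquiv_toLp (Fin 2)).symm).comp
      (volume_preserving_finTwoArrow ℝ).symm
  have hΦ_apply (p t : ℝ) : Φ (p, t) = p • b 0 + t • b 1 := by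
    simp [Φ, OrthonormalBasis.measurableEquiv, ← b.sum_repr_symm, Fin.sum_univ_two,
      MeasurableEquiv.finTwoArrow]
  have hgΦ : Integrable (g ∘ Φ) := (hΦ.integrable_comp_emb Φ.measurableEmbedding).mpr hg
  rw [← hΦ.integral_comp' g]
  exact (integral_prod _ hgΦ).trans (by simp only [Function.comp_apply, hΦ_apply])

theorem integral_eq_integral_integral_of_orthonormal (hE : Module.finrank ℝ E = 2)
    {v : Fin 2 → E} (hv : Orthonormal ℝ v) {g : E → G} (hg : Integrable g) :
    ∫ x, g x = ∫ p : ℝ, ∫ t : ℝ, g (p • v 0 + t • v 1) := by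
  let b := basisOfOrthonormalOfCardEqFinrank hv (by simp [hE])
  have hb : ⇑b = v := coe_basisOfOrthonormalOfCardEqFinrank hv _
  simpa [hb] using (b.toOrthonormalBasis (hb ▸ hv)).integral_eq_integral_integral hg

end Integration

theorem MeasureTheory.Integrable.cexp_neg_I_mul_mul {α : Type*} [MeasurableSpace α]
    {μ : Measure α} {g : α → ℂ} (hg : Integrable g μ) {φ : α → ℝ} (hφ : Measurable φ) :
    Integrable (fun x ↦ Complex.exp (-(Complex.I * φ x)) * g x) μ := by
  refine hg.bdd_mul (c := 1) (by fun_prop) (Filter.Eventually.of_forall fun x ↦ ?_)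
  simp [Complex.norm_exp]

/-- Fourier slice theorem: the 1D Fourier transform in `p` of `ℛf(ω,·)`
is `𝓕f(qω)`. -/
theorem fourier_slice (f : SchwartzMap E2 ℂ) (w : E2) (hw : ‖w‖ = 1) (q : ℝ) :
    ∫ p : ℝ, Complex.exp (-(Complex.I * q * p)) * Radon (⇑f) w p = FT (⇑f) (q • w) := by
  have hint := f.integrable.cexp_neg_I_mul_mul (μ := volume) (φ := fun x ↦ ⟪x, q • w⟫)
    (by fun_prop)
  rw [FT, integral_eq_integral_integral_of_orthonormal finrank_euclideanSpace_fin
    (orthonormal_perp hw) hint]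
  congr 1 with p
  simp only [Radon, ← MeasureTheory.integral_const_mul, Matrix.cons_val_zero, Matrix.cons_val_one,
    inner_smul_add_smul_perp_smul hw, Complex.ofReal_mul, mul_assoc]
end
end

section
/- Filtered backprojection inversion formula: For every Schwartz function f on ℝ² and every x ∈ ℝ², f(x) = ∫_0^{2π} G_f(ω(φ), x·ω(φ)) dφ, where G_f is the filtered projection of f. -/
open MeasureTheory Real intervalIntegral
open scoped RealInnerProductSpace

noncomputable section

/-- The filtered projection `G_f(ω,p) = (1/(8π²)) ∫ e^{i p q} |q| 𝓕f(qω) dq`,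
which equals `ℋℛf` by the Fourier slice theorem. -/
def filtProj (f : E2 → ℂ) (w : E2) (p : ℝ) : ℂ :=
  (1 / (8 * (π : ℂ) ^ 2)) * ∫ q : ℝ, Complex.exp (Complex.I * p * q) * (|q| : ℝ) * FT f (q • w)

/-!
Fourier inversion, in Mathlib's normalization `𝓕 f ξ = FT f (2π ξ)`, writes `f x` as the integral
over the plane of `g ξ = 𝐞 ⟪ξ, x⟫ 𝓕 f ξ`. In polar coordinates this is `∫_{-π}^{π} K θ dθ` with
`K θ = ∫_0^∞ r g (r ω θ) dr`. Since `ω (φ + π) = -ω φ`, the integral of `|s| g (s ω φ)` over the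
whole line `s ∈ ℝ` is `K φ + K (φ + π)`, so integrating it over a full period of `φ` counts every
direction twice; the substitution `q = 2π s` turns the resulting factor `1/2` into the `1/(8π²)`
of `G_f`.
-/

open FourierTransform Set

theorem norm_omega (φ : ℝ) : ‖omega φ‖ = 1 := by
  simp [EuclideanSpace.norm_eq, omega, Fin.sum_univ_two]

theorem omega_add_pi (φ : ℝ) : omega (φ + π) = -omega φ := by
  ext i
  fin_cases i <;> simp [omega, cos_add_pi, sin_add_pi]

theorem omega_periodic : Function.Periodic omega (2 * π) := by
  intro φ
  simp [omega]

theorem SchwartzMap.integrable_abs_smul_comp_smul {V F : Type*} [NormedAddCommGroup V]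
    [NormedSpace ℝ V] [NormedAddCommGroup F] [NormedSpace ℝ F] (f : SchwartzMap V F) {v : V}
    (hv : v ≠ 0) : Integrable (fun s : ℝ => |s| • f (s • v)) := by
  let L : ℝ →L[ℝ] V := ContinuousLinearMap.toSpanSingleton ℝ v
  have hL : AntilipschitzWith ‖v‖₊⁻¹ L := AntilipschitzWith.of_le_mul_dist fun s t => by
    simp only [L, ContinuousLinearMap.toSpanSingleton_apply, dist_eq_norm, ← sub_smul, norm_smul,
      Real.norm_eq_abs, NNReal.coe_inv, coe_nnnorm]
    rw [mul_comm |s - t|, inv_mul_cancel_left₀ (norm_ne_zero_iff.2 hv)]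
  refine ((compCLMOfAntilipschitz ℝ L.hasTemperateGrowth hL f).integrable_pow_mul volume 1).congr'
    (by fun_prop) (ae_of_all _ fun s => ?_)
  simp [L, norm_smul]

theorem integrable_fourierChar_smul {α E : Type*} [TopologicalSpace α] [MeasurableSpace α]
    [OpensMeasurableSpace α] {μ : Measure α} [NormedAddCommGroup E] [NormedSpace ℂ E]
    {L : α → ℝ} {F : α → E} (hL : Continuous L) (hF : Integrable F μ) :
    Integrable (fun a => 𝐞 (L a) • F a) μ :=
  hF.congr' ((continuous_fourierChar.comp hL).aestronglyMeasurable.smul hF.1)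
    (ae_of_all _ fun a => by simp)

def measurableEquivProd : E2 ≃ᵐ ℝ × ℝ :=
  (MeasurableEquiv.toLp 2 (Fin 2 → ℝ)).symm.trans MeasurableEquiv.finTwoArrow

theorem measurePreserving_measurableEquivProd :
    MeasurePreserving measurableEquivProd volume volume :=
  (volume_preserving_finTwoArrow ℝ).comp
    (EuclideanSpace.volume_preserving_symm_measurableEquiv_toLp (Fin 2))

theorem measurableEquivProd_symm_polarCoord_symm (p : ℝ × ℝ) :
    measurableEquivProd.symm (polarCoord.symm p) = p.1 • omega p.2 := by
  ext i
  fin_cases i <;>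
    simp [measurableEquivProd, omega, MeasurableEquiv.finTwoArrow, polarCoord, mul_comm]

section

variable {E : Type*} [NormedAddCommGroup E] [NormedSpace ℝ E]

theorem integrableOn_polarCoord_target {f : ℝ × ℝ → E} (hf : Integrable f) :
    IntegrableOn (fun p => p.1 • f (polarCoord.symm p)) polarCoord.target := by
  have hsource : IntegrableOn f (polarCoord.symm '' polarCoord.target) := hf.integrableOn
  rw [integrableOn_image_iff_integrableOn_abs_det_fderiv_smul volume
    polarCoord.open_target.measurableSet
    (fun p _ => (hasFDerivAt_polarCoord_symm p).hasFDerivWithinAt) polarCoord.symm.injOn] at hsource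
  refine hsource.congr_fun (fun p hp => ?_) polarCoord.open_target.measurableSet
  simp only [det_fderivPolarCoordSymm, abs_of_pos (mem_Ioi.1 hp.1)]

def radialIntegral (g : E2 → E) (θ : ℝ) : E :=
  ∫ r in Ioi (0 : ℝ), r • g (r • omega θ)

theorem radialIntegral_periodic (g : E2 → E) : Function.Periodic (radialIntegral g) (2 * π) := by
  intro θ
  simp only [radialIntegral, omega_periodic θ]

theorem integrable_polar_integrand {g : E2 → E} (hg : Integrable g) :
    Integrable (fun p : ℝ × ℝ => p.1 • g (p.1 • omega p.2))
      ((volume.restrict (Ioi 0)).prod (volume.restrict (Ioo (-π) π))) := by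
  have hf : Integrable (g ∘ measurableEquivProd.symm) :=
    (measurePreserving_measurableEquivProd.symm.integrable_comp_emb
      measurableEquivProd.symm.measurableEmbedding).2 hg
  have := integrableOn_polarCoord_target hf
  simp only [Function.comp_apply, measurableEquivProd_symm_polarCoord_symm,
    polarCoord_target] at this
  rwa [Measure.prod_restrict, ← Measure.volume_eq_prod]

theorem integrableOn_radialIntegral {g : E2 → E} (hg : Integrable g) :
    IntegrableOn (radialIntegral g) (Ioo (-π) π) :=
  (integrable_polar_integrand hg).integral_prod_right

theorem integral_eq_integral_radialIntegral [CompleteSpace E] {g : E2 → E} (hg : Integrable g) :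
    ∫ ξ, g ξ = ∫ θ in Ioo (-π) π, radialIntegral g θ := by
  rw [← measurePreserving_measurableEquivProd.symm.integral_comp
      measurableEquivProd.symm.measurableEmbedding,
    ← integral_comp_polarCoord_symm, polarCoord_target, Measure.volume_eq_prod,
    ← Measure.prod_restrict]
  simp only [measurableEquivProd_symm_polarCoord_symm]
  rw [integral_prod_symm _ (integrable_polar_integrand hg)]
  rfl

theorem integral_abs_smul_line [CompleteSpace E] {g : E2 → E} {φ : ℝ}
    (hline : Integrable fun s : ℝ => |s| • g (s • omega φ)) :
    ∫ s : ℝ, |s| • g (s • omega φ) = radialIntegral g φ + radialIntegral g (φ + π) := by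
  rw [← integral_Iic_add_Ioi hline.integrableOn hline.integrableOn, add_comm]
  congr 1
  · refine setIntegral_congr_fun measurableSet_Ioi fun s hs => ?_
    rw [abs_of_pos (mem_Ioi.1 hs)]
  · rw [← neg_zero, ← integral_comp_neg_Ioi]
    refine setIntegral_congr_fun measurableSet_Ioi fun s hs => ?_
    rw [abs_neg, abs_of_pos (mem_Ioi.1 hs), omega_add_pi, neg_smul, smul_neg]

theorem integral_eq_half_intervalIntegral_integral_line [CompleteSpace E] {g : E2 → E}
    (hg : Integrable g) (hline : ∀ φ : ℝ, Integrable fun s : ℝ => |s| • g (s • omega φ)) :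
    ∫ ξ, g ξ = (2⁻¹ : ℝ) • ∫ φ in 0..2 * π, ∫ s : ℝ, |s| • g (s • omega φ) := by
  have hK := radialIntegral_periodic g
  have hKint : ∀ a b, IntervalIntegrable (radialIntegral g) volume a b := by
    refine hK.intervalIntegrable (t := -π) (by positivity) ?_
    rw [show -π + 2 * π = π by ring,
      intervalIntegrable_iff_integrableOn_Ioo_of_le (by linarith [pi_pos])]
    exact integrableOn_radialIntegral hg
  have hperiod (t : ℝ) :
      ∫ θ in t..t + 2 * π, radialIntegral g θ = ∫ θ in 0..2 * π, radialIntegral g θ := by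
    rw [hK.intervalIntegral_add_eq t 0, zero_add]
  have hfull : ∫ ξ, g ξ = ∫ θ in 0..2 * π, radialIntegral g θ := by
    rw [integral_eq_integral_radialIntegral hg, ← hperiod (-π), show -π + 2 * π = π by ring,
      intervalIntegral.integral_of_le (by linarith [pi_pos]), integral_Ioc_eq_integral_Ioo]
  simp_rw [integral_abs_smul_line (hline _)]
  rw [intervalIntegral.integral_add (hKint _ _)
      ((IntervalIntegrable.comp_add_right_iff (by finiteness)).2 (hKint _ _)),
    intervalIntegral.integral_comp_add_right, zero_add, add_comm (2 * π), hperiod, hfull,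
    ← two_smul ℝ, smul_smul]
  norm_num

end

theorem FT_eq_fourier (f : E2 → ℂ) (ξ : E2) : FT f ξ = 𝓕 f ((2 * π)⁻¹ • ξ) := by
  rw [Real.fourier_eq, FT]
  congr 1 with x
  rw [real_inner_smul_right, Circle.smul_def, fourierChar_apply, smul_eq_mul]
  push_cast
  field_simp

theorem filtProj_eq (f : E2 → ℂ) (w : E2) (p : ℝ) :
    filtProj f w p = (2⁻¹ : ℝ) • ∫ s : ℝ, |s| • 𝐞 (s * p) • 𝓕 f (s • w) := by
  set F := fun q : ℝ => Complex.exp (Complex.I * p * q) * (|q| : ℝ) * FT f (q • w)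
  have hscale : ∫ q, F q = (2 * π) • ∫ s, F (2 * π * s) := by
    rw [Measure.integral_comp_mul_left, smul_smul, abs_of_pos (by positivity),
      mul_inv_cancel₀ (by positivity), one_smul]
  rw [filtProj, hscale, ← MeasureTheory.integral_smul, ← MeasureTheory.integral_smul,
    ← MeasureTheory.integral_const_mul]
  congr 1 with s
  have hπ : (π : ℂ) ≠ 0 := Complex.ofReal_ne_zero.2 pi_ne_zero
  simp only [F, FT_eq_fourier, smul_smul, Circle.smul_def, fourierChar_apply, abs_mul,
    abs_of_pos two_pi_pos, inv_mul_cancel_left₀ two_pi_pos.ne', Complex.real_smul, smul_eq_mul]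
  push_cast
  field_simp
  ring

/-- Filtered backprojection inversion formula:
`f(x) = ∫_0^{2π} G_f(ω(φ), x·ω(φ)) dφ`. -/
theorem filtered_backprojection (f : SchwartzMap E2 ℂ) (x : E2) :
    f x = ∫ φ in (0:ℝ)..(2 * π), filtProj (⇑f) (omega φ) ⟪x, omega φ⟫ := by
  let g : E2 → ℂ := fun ξ => 𝐞 ⟪ξ, x⟫ • 𝓕 (⇑f) ξ
  have hFf : Integrable (𝓕 (⇑f)) := by
    rw [← SchwartzMap.fourier_coe]; exact (𝓕 f).integrable
  have hinv : f x = ∫ ξ, g ξ := by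
    rw [← Real.fourierInv_eq, f.continuous.fourierInv_fourier_eq f.integrable hFf]
  have hg : Integrable g := integrable_fourierChar_smul (by fun_prop) hFf
  have hline (φ : ℝ) : Integrable fun s : ℝ => |s| • g (s • omega φ) := by
    simp only [g, smul_comm |_| (𝐞 _)]
    refine integrable_fourierChar_smul (by fun_prop) ?_
    rw [← SchwartzMap.fourier_coe]
    exact (𝓕 f).integrable_abs_smul_comp_smul (norm_ne_zero_iff.1 (by simp [norm_omega]))
  rw [hinv, integral_eq_half_intervalIntegral_integral_line hg hline,
    ← intervalIntegral.integral_smul]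
  simp only [filtProj_eq, g, real_inner_comm x, real_inner_smul_right]
end
end

section
/- Core of Lemma 6.1 (L1)–(L2) (logarithmic singularity of the Hilbert transform of a one-sided cutoff): Let ψ ∈ C_c^∞(ℝ). Then the function defined for x ∈ ℝ ∖ {0} by g(x) = lim_{ε→0⁺} ∫_{{s ≥ 0, |s − x| > ε}} ψ(s)/(x − s) ds − ψ(0) log|x| extends to a continuous function on all of ℝ. (Applied to ψ = φ′ and to ψ(s) = sφ′(s) + φ(s), this yields the paper's identities ℋ(φ h₀) ≡ (1/(4π²))(φ(0) pv(1/x) + φ′(0) log|x|) and ℋ(φ x₊) ≡ (1/(4π²)) φ(0) log|x| modulo C⁰, where h₀ is the Heaviside function, x₊ = max(x,0), and ℋ = (1/(4π)) H d/dx with H the Hilbert transform.) -/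
open MeasureTheory Real Filter

noncomputable section

private lemma integral_inv_sub_eq {x a b : ℝ} (h : (0:ℝ) ∉ Set.uIcc (x - b) (x - a)) :
    ∫ s in a..b, (x - s)⁻¹ = Real.log |x - a| - Real.log |x - b| := by
  have ha : x - a ≠ 0 := fun h0 => h (h0 ▸ Set.right_mem_uIcc)
  have hb : x - b ≠ 0 := fun h0 => h (h0 ▸ Set.left_mem_uIcc)
  rw [intervalIntegral.integral_comp_sub_left (fun u : ℝ => u⁻¹) x]
  simp_rw [← one_div]
  rw [integral_one_div h, Real.log_div ha hb, Real.log_abs, Real.log_abs]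


/-- Core of Lemma 6.1 (L1)–(L2): for `ψ ∈ C_c^∞(ℝ)`, the function
`g(x) = lim_{ε→0⁺} ∫_{{s ≥ 0, |s−x| > ε}} ψ(s)/(x−s) ds − ψ(0) log|x|` (for
`x ≠ 0`) extends to a continuous function on all of `ℝ`.  (Applied to `ψ = φ′`
and to `ψ(s) = sφ′(s) + φ(s)`, this yields the identities
`ℋ(φ h₀) ≡ (1/(4π²))(φ(0) pv(1/x) + φ′(0) log|x|)` and
`ℋ(φ x₊) ≡ (1/(4π²)) φ(0) log|x|` modulo `C⁰`.) -/
theorem onesided_pv_log_continuous (ψ : ℝ → ℝ)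
    (hψ_smooth : ContDiff ℝ (⊤ : ℕ∞) ψ) (hψ_supp : HasCompactSupport ψ) :
    ∃ g : ℝ → ℝ, Continuous g ∧ ∀ x : ℝ, x ≠ 0 →
      Filter.Tendsto
        (fun ε : ℝ =>
          (∫ s in {s : ℝ | 0 ≤ s ∧ ε < |s - x|}, ψ s / (x - s)) - ψ 0 * Real.log |x|)
        (nhdsWithin 0 (Set.Ioi 0)) (nhds (g x)) := by
  classical
  obtain ⟨L, hLip⟩ := ContDiff.lipschitzWith_of_hasCompactSupport hψ_supp hψ_smooth (by simp)
  obtain ⟨R, hR0, hRψ⟩ := hψ_supp.exists_pos_le_norm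
  have hcont := hψ_smooth.continuous
  have hψR : ∀ s : ℝ, R ≤ s → ψ s = 0 := fun s hs =>
    hRψ s (by rw [Real.norm_eq_abs]; exact le_trans hs (le_abs_self s))
  have hLipAbs : ∀ a b : ℝ, |ψ a - ψ b| ≤ L * |a - b| := by
    intro a b
    have := hLip.dist_le_mul a b
    rwa [Real.dist_eq, Real.dist_eq] at this
  set K : ℝ → ℝ → ℝ := fun x s => (ψ s - ψ x) / (x - s) with hK
  have hbound : ∀ x s, |K x s| ≤ L := by
    intro x s
    rcases eq_or_ne x s with rfl | hxs
    · simp [hK]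
    · rw [hK]; dsimp only; rw [abs_div,
        div_le_iff₀ (abs_pos.mpr (sub_ne_zero.mpr hxs))]
      calc |ψ s - ψ x| ≤ L * |s - x| := hLipAbs s x
        _ = L * |x - s| := by rw [abs_sub_comm]
  have hmeasK : ∀ x, Measurable (K x) := fun x =>
    (hcont.measurable.sub_const (ψ x)).div (measurable_const.sub measurable_id)
  have hIccFin : volume (Set.Icc (0:ℝ) (2*R)) < ⊤ := measure_Icc_lt_top
  have hLint : Integrable (fun _ : ℝ => (L:ℝ)) (volume.restrict (Set.Icc 0 (2*R))) :=
    integrableOn_const hIccFin.ne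
  have hKint : ∀ x, IntegrableOn (K x) (Set.Icc 0 (2*R)) := by
    intro x
    refine Integrable.mono' hLint
      (hmeasK x).aestronglyMeasurable (ae_of_all _ fun s => ?_)
    rw [Real.norm_eq_abs]; exact hbound x s
  set F : ℝ → ℝ := fun x => ∫ s in Set.Icc (0:ℝ) (2*R), K x s with hFdef
  have hne' : ∀ x₀ : ℝ, ∀ᵐ s : ℝ, s ≠ x₀ := by
    intro x₀
    rw [ae_iff]
    have : {a : ℝ | ¬ a ≠ x₀} = {x₀} := by ext a; simp
    rw [this]
    exact measure_singleton x₀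
  -- continuity of F
  have hcontF : Continuous F := by
    rw [continuous_iff_continuousAt]; intro x₀
    apply continuousAt_of_dominated (bound := fun _ => (L:ℝ))
    · exact Filter.Eventually.of_forall fun x => (hmeasK x).aestronglyMeasurable
    · exact Filter.Eventually.of_forall fun x => ae_of_all _ fun s => by
        rw [Real.norm_eq_abs]; exact hbound x s
    · exact hLint
    · refine (ae_restrict_of_ae (hne' x₀)).mono fun s hs => ?_
      rw [hK]; dsimp only
      exact ContinuousAt.div (continuous_const.sub hcont).continuousAt
        (continuous_id.sub continuous_const).continuousAt
        (sub_ne_zero.mpr (Ne.symm hs))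
  -- continuity of second term
  have hcont2 : Continuous fun x : ℝ => (ψ x - ψ 0) * Real.log |x| := by
    rw [continuous_iff_continuousAt]; intro x₀
    rcases eq_or_ne x₀ 0 with rfl | hx₀
    · have hval : (ψ (0:ℝ) - ψ 0) * Real.log |(0:ℝ)| = 0 := by simp
      rw [ContinuousAt, hval]
      apply squeeze_zero_norm (a := fun x : ℝ => L * ‖|x| * Real.log |x|‖)
      · intro x
        have h1 : |ψ x - ψ 0| ≤ L * |x| := by simpa using hLipAbs x 0
        have h2 : ‖(ψ x - ψ 0) * Real.log |x|‖ = |ψ x - ψ 0| * ‖Real.log |x|‖ := by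
          rw [norm_mul, Real.norm_eq_abs]
        have h3 : ‖|x| * Real.log |x|‖ = |x| * ‖Real.log |x|‖ := by
          rw [norm_mul, Real.norm_eq_abs, abs_abs]
        rw [h2, h3, ← mul_assoc]
        exact mul_le_mul_of_nonneg_right h1 (norm_nonneg _)
      · have h2 : Tendsto (fun x : ℝ => ‖|x| * Real.log |x|‖) (nhds 0)
            (nhds ‖|(0:ℝ)| * Real.log |(0:ℝ)|‖) :=
          ((Real.continuous_mul_log.comp continuous_abs).norm).tendsto 0
        simp only [abs_zero, Real.log_zero, mul_zero, norm_zero] at h2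
        simpa using h2.const_mul (L:ℝ)
    · have h1 : ContinuousAt (fun x : ℝ => |x|) x₀ := continuous_abs.continuousAt
      exact ((hcont.sub continuous_const).continuousAt).mul
        (h1.log (abs_ne_zero.mpr hx₀))
  -- continuity of third term
  have hcont3 : Continuous fun x : ℝ => ψ x * Real.log |x - 2*R| := by
    rw [continuous_iff_continuousAt]; intro x₀
    rcases eq_or_ne x₀ (2*R) with rfl | hx₀
    · have hev : (fun x : ℝ => ψ x * Real.log |x - 2*R|) =ᶠ[nhds (2*R)] fun _ => 0 := by
        filter_upwards [Ioi_mem_nhds (show R < 2*R by linarith)] with x hxmem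
        rw [hψR x (le_of_lt hxmem), zero_mul]
      exact ContinuousAt.congr continuousAt_const hev.symm
    · have h1 : ContinuousAt (fun x : ℝ => |x - 2*R|) x₀ :=
        ((continuous_id.sub continuous_const).abs).continuousAt
      exact hcont.continuousAt.mul (h1.log (abs_ne_zero.mpr (sub_ne_zero.mpr hx₀)))
  refine ⟨fun x => F x + (ψ x - ψ 0) * Real.log |x| - ψ x * Real.log |x - 2*R|,
    (hcontF.add hcont2).sub hcont3, ?_⟩
  intro x hx
  show Filter.Tendsto _ _ (nhds (F x + (ψ x - ψ 0) * Real.log |x| - ψ x * Real.log |x - 2*R|))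
  have hdecomp : ∀ s : ℝ, ψ s / (x - s) = K x s + ψ x * (x - s)⁻¹ := by
    intro s; rw [hK]; dsimp only
    rw [← div_eq_mul_inv, ← add_div, sub_add_cancel]
  have hUmeas : ∀ ε : ℝ, MeasurableSet {s : ℝ | ε < |s - x|} := fun ε =>
    (isOpen_lt continuous_const ((continuous_id.sub continuous_const).abs)).measurableSet
  have hSU : ∀ ε : ℝ, {s : ℝ | 0 ≤ s ∧ ε < |s - x|} = Set.Ici 0 ∩ {s : ℝ | ε < |s - x|} := by
    intro ε; ext s; simp [Set.mem_Ici]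
  have hind : ∀ (U : Set ℝ) (s : ℝ),
      (Set.Ici 0 ∩ U).indicator (fun s => ψ s / (x - s)) s
        = (Set.Icc 0 (2*R) ∩ U).indicator (fun s => ψ s / (x - s)) s := by
    intro U s
    rcases eq_or_ne (ψ s) 0 with h0 | h0
    · simp only [Set.indicator_apply]; split_ifs <;> simp [h0]
    · have hsR : s < R := by by_contra h; exact h0 (hψR s (not_lt.1 h))
      have hmem : s ∈ Set.Ici (0:ℝ) ∩ U ↔ s ∈ Set.Icc (0:ℝ) (2*R) ∩ U := by
        constructor
        · rintro ⟨h1, h2⟩; exact ⟨⟨h1, by linarith⟩, h2⟩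
        · rintro ⟨h1, h2⟩; exact ⟨h1.1, h2⟩
      rw [Set.indicator_apply, Set.indicator_apply, if_congr hmem rfl rfl]
  rcases lt_trichotomy x 0 with hxneg | hx0 | hxpos
  · -- case x < 0
    have hinv : IntegrableOn (fun s : ℝ => (x - s)⁻¹) (Set.Icc 0 (2*R)) := by
      apply ContinuousOn.integrableOn_Icc
      apply ContinuousOn.inv₀ (continuous_const.sub continuous_id).continuousOn
      intro s hs
      exact sub_ne_zero.mpr (ne_of_lt (lt_of_lt_of_le hxneg hs.1))
    have hsame : ∫ s in Set.Ici (0:ℝ), ψ s / (x - s) = ∫ s in Set.Icc (0:ℝ) (2*R), ψ s / (x - s) := by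
      apply setIntegral_eq_of_subset_of_ae_diff_eq_zero measurableSet_Ici.nullMeasurableSet
        (fun s hs => hs.1)
      refine ae_of_all _ ?_
      rintro s ⟨hs1, hs2⟩
      have hs3 : 2*R < s := by
        by_contra h
        exact hs2 ⟨hs1, not_lt.1 h⟩
      rw [hψR s (by linarith), zero_div]
    have hval : ∫ s in Set.Icc (0:ℝ) (2*R), ψ s / (x - s)
        = F x + ψ x * (Real.log |x| - Real.log |x - 2*R|) := by
      have h1 : ∫ s in Set.Icc (0:ℝ) (2*R), ψ s / (x - s)
          = (∫ s in Set.Icc (0:ℝ) (2*R), K x s)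
            + ∫ s in Set.Icc (0:ℝ) (2*R), ψ x * (x - s)⁻¹ := by
        rw [← integral_add (hKint x) (hinv.const_mul (ψ x))]
        exact setIntegral_congr_fun measurableSet_Icc fun s _ => hdecomp s
      rw [h1, integral_const_mul]
      have h2 : ∫ s in Set.Icc (0:ℝ) (2*R), (x - s)⁻¹
          = Real.log |x| - Real.log |x - 2*R| := by
        rw [integral_Icc_eq_integral_Ioc,
          ← intervalIntegral.integral_of_le (by linarith : (0:ℝ) ≤ 2*R)]
        have hcond : (0:ℝ) ∉ Set.uIcc (x - 2*R) (x - 0) := by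
          rw [Set.uIcc_of_le (by linarith : x - 2*R ≤ x - 0)]
          rw [Set.mem_Icc]
          rintro ⟨-, h2⟩
          linarith
        have := integral_inv_sub_eq hcond
        rwa [sub_zero] at this
      rw [h2]
    have hev : (fun ε : ℝ =>
        (∫ s in {s : ℝ | 0 ≤ s ∧ ε < |s - x|}, ψ s / (x - s)) - ψ 0 * Real.log |x|)
          =ᶠ[nhdsWithin (0:ℝ) (Set.Ioi 0)]
        (fun _ => (∫ s in Set.Ici (0:ℝ), ψ s / (x - s)) - ψ 0 * Real.log |x|) := by
      filter_upwards [Ioo_mem_nhdsGT (show (0:ℝ) < -x by linarith)] with ε hε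
      congr 1
      have hset : {s : ℝ | 0 ≤ s ∧ ε < |s - x|} = Set.Ici 0 := by
        ext s
        simp only [Set.mem_setOf_eq, Set.mem_Ici]
        constructor
        · exact fun h => h.1
        · intro hs
          refine ⟨hs, ?_⟩
          rw [abs_of_pos (by linarith : (0:ℝ) < s - x)]
          have := hε.2
          linarith
      rw [hset]
    have hvg : (∫ s in Set.Ici (0:ℝ), ψ s / (x - s)) - ψ 0 * Real.log |x|
        = F x + (ψ x - ψ 0) * Real.log |x| - ψ x * Real.log |x - 2*R| := by
      rw [hsame, hval]; ring
    exact Tendsto.congr' hev.symm (hvg ▸ tendsto_const_nhds)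
  · exact absurd hx0 hx
  · rcases lt_or_ge x (2*R) with hxM | hxM
    · -- case 0 < x < 2R
      have hδ : 0 < min x (2*R - x) := lt_min hxpos (by linarith)
      have hDCT : Tendsto (fun ε : ℝ => ∫ s in Set.Icc (0:ℝ) (2*R),
          ({s : ℝ | ε < |s - x|}.indicator (K x)) s)
          (nhdsWithin (0:ℝ) (Set.Ioi 0)) (nhds (F x)) := by
        apply tendsto_integral_filter_of_dominated_convergence (bound := fun _ => (L:ℝ))
        · exact Filter.Eventually.of_forall fun ε =>
            ((hmeasK x).indicator (hUmeas ε)).aestronglyMeasurable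
        · refine Filter.Eventually.of_forall fun ε => ae_of_all _ fun s => ?_
          refine le_trans (norm_indicator_le_norm_self (K x) s) ?_
          rw [Real.norm_eq_abs]; exact hbound x s
        · exact hLint
        · refine ae_restrict_of_ae ((hne' x).mono fun s hs => ?_)
          have hmem : Set.Iio |s - x| ∈ nhdsWithin (0:ℝ) (Set.Ioi 0) :=
            nhdsWithin_le_nhds (Iio_mem_nhds (abs_pos.mpr (sub_ne_zero.mpr hs)))
          have hevEq : (fun _ : ℝ => K x s) =ᶠ[nhdsWithin (0:ℝ) (Set.Ioi 0)]
              (fun ε => ({s' : ℝ | ε < |s' - x|}.indicator (K x)) s) := by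
            filter_upwards [hmem] with ε hε
            exact (Set.indicator_of_mem (show s ∈ {s' : ℝ | ε < |s' - x|} from hε) (K x)).symm
          exact Tendsto.congr' hevEq tendsto_const_nhds
      have hev2 : (fun ε : ℝ =>
          (∫ s in {s : ℝ | 0 ≤ s ∧ ε < |s - x|}, ψ s / (x - s)) - ψ 0 * Real.log |x|)
          =ᶠ[nhdsWithin (0:ℝ) (Set.Ioi 0)]
          (fun ε => (∫ s in Set.Icc (0:ℝ) (2*R), ({s : ℝ | ε < |s - x|}.indicator (K x)) s)
            + ψ x * (Real.log x - Real.log (2*R - x)) - ψ 0 * Real.log |x|) := by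
        filter_upwards [Ioo_mem_nhdsGT hδ] with ε hε
        obtain ⟨hε0, hεδ⟩ := hε
        have hεx : ε < x := lt_of_lt_of_le hεδ (min_le_left _ _)
        have hεM : ε < 2*R - x := lt_of_lt_of_le hεδ (min_le_right _ _)
        have hUm := hUmeas ε
        congr 1
        have ha : (∫ s in {s : ℝ | 0 ≤ s ∧ ε < |s - x|}, ψ s / (x - s))
            = ∫ s in Set.Icc (0:ℝ) (2*R) ∩ {s : ℝ | ε < |s - x|}, ψ s / (x - s) := by
          rw [hSU ε, ← integral_indicator (measurableSet_Ici.inter hUm),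
            funext (hind {s : ℝ | ε < |s - x|}),
            integral_indicator (measurableSet_Icc.inter hUm)]
        have hTeq : Set.Icc (0:ℝ) (2*R) ∩ {s : ℝ | ε < |s - x|}
            = Set.Ico 0 (x - ε) ∪ Set.Ioc (x + ε) (2*R) := by
          ext s
          simp only [Set.mem_inter_iff, Set.mem_Icc, Set.mem_setOf_eq, Set.mem_union,
            Set.mem_Ico, Set.mem_Ioc]
          rw [lt_abs]
          constructor
          · rintro ⟨⟨h1, h2⟩, h3 | h3⟩
            · right; constructor <;> linarith
            · left; constructor <;> linarith
          · rintro (⟨h1, h2⟩ | ⟨h1, h2⟩)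
            · exact ⟨⟨h1, by linarith⟩, Or.inr (by linarith)⟩
            · exact ⟨⟨by linarith, h2⟩, Or.inl (by linarith)⟩
        have hinv1 : IntegrableOn (fun s : ℝ => (x - s)⁻¹) (Set.Ico 0 (x - ε)) := by
          refine (ContinuousOn.integrableOn_Icc ?_).mono_set Set.Ico_subset_Icc_self
          refine ContinuousOn.inv₀ (continuous_const.sub continuous_id).continuousOn
            fun s hs => ?_
          exact ne_of_gt (by have := hs.2; linarith : (0:ℝ) < x - s)
        have hinv2 : IntegrableOn (fun s : ℝ => (x - s)⁻¹) (Set.Ioc (x + ε) (2*R)) := by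
          refine (ContinuousOn.integrableOn_Icc ?_).mono_set Set.Ioc_subset_Icc_self
          refine ContinuousOn.inv₀ (continuous_const.sub continuous_id).continuousOn
            fun s hs => ?_
          exact ne_of_lt (by have := hs.1; linarith : x - s < 0)
        have hinvT : IntegrableOn (fun s : ℝ => (x - s)⁻¹)
            (Set.Icc (0:ℝ) (2*R) ∩ {s : ℝ | ε < |s - x|}) := by
          rw [hTeq]; exact hinv1.union hinv2
        have hKT : IntegrableOn (K x) (Set.Icc (0:ℝ) (2*R) ∩ {s : ℝ | ε < |s - x|}) :=
          (hKint x).mono_set Set.inter_subset_left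
        have hb : ∫ s in Set.Icc (0:ℝ) (2*R) ∩ {s : ℝ | ε < |s - x|}, ψ s / (x - s)
            = (∫ s in Set.Icc (0:ℝ) (2*R) ∩ {s : ℝ | ε < |s - x|}, K x s)
              + ψ x * ∫ s in Set.Icc (0:ℝ) (2*R) ∩ {s : ℝ | ε < |s - x|}, (x - s)⁻¹ := by
          rw [← integral_const_mul, ← integral_add hKT (hinvT.const_mul (ψ x))]
          exact setIntegral_congr_fun (measurableSet_Icc.inter hUm) fun s _ => hdecomp s
        have hc : (∫ s in Set.Icc (0:ℝ) (2*R) ∩ {s : ℝ | ε < |s - x|}, K x s)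
            = ∫ s in Set.Icc (0:ℝ) (2*R), ({s : ℝ | ε < |s - x|}.indicator (K x)) s :=
          (setIntegral_indicator hUm).symm
        have hd1 : ∫ s in Set.Ico (0:ℝ) (x - ε), (x - s)⁻¹ = Real.log x - Real.log ε := by
          rw [← MeasureTheory.integral_Icc_eq_integral_Ico,
            MeasureTheory.integral_Icc_eq_integral_Ioc,
            ← intervalIntegral.integral_of_le (by linarith : (0:ℝ) ≤ x - ε)]
          have hcond : (0:ℝ) ∉ Set.uIcc (x - (x - ε)) (x - 0) := by
            rw [show x - (x - ε) = ε by ring, sub_zero,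
              Set.uIcc_of_le (by linarith : ε ≤ x), Set.mem_Icc]
            rintro ⟨h1, -⟩; linarith
          have h := integral_inv_sub_eq hcond
          rw [sub_zero, show x - (x - ε) = ε by ring, abs_of_pos hxpos, abs_of_pos hε0] at h
          exact h
        have hd2 : ∫ s in Set.Ioc (x + ε) (2*R), (x - s)⁻¹
            = Real.log ε - Real.log (2*R - x) := by
          rw [← intervalIntegral.integral_of_le (by linarith : x + ε ≤ 2*R)]
          have hcond : (0:ℝ) ∉ Set.uIcc (x - 2*R) (x - (x + ε)) := by
            rw [show x - (x + ε) = -ε by ring,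
              Set.uIcc_of_le (by linarith : x - 2*R ≤ -ε), Set.mem_Icc]
            rintro ⟨-, h2⟩; linarith
          have h := integral_inv_sub_eq hcond
          rw [show x - (x + ε) = -ε by ring, abs_neg, abs_of_pos hε0,
            abs_of_neg (by linarith : x - 2*R < 0), show -(x - 2*R) = 2*R - x by ring] at h
          exact h
        have hdisj : Disjoint (Set.Ico (0:ℝ) (x - ε)) (Set.Ioc (x + ε) (2*R)) := by
          rw [Set.disjoint_left]
          rintro s ⟨h1, h2⟩ ⟨h3, h4⟩
          linarith
        have hd : ∫ s in Set.Icc (0:ℝ) (2*R) ∩ {s : ℝ | ε < |s - x|}, (x - s)⁻¹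
            = Real.log x - Real.log (2*R - x) := by
          rw [hTeq, setIntegral_union hdisj measurableSet_Ioc hinv1 hinv2, hd1, hd2]
          ring
        rw [ha, hb, hc, hd]
      have hvg : F x + ψ x * (Real.log x - Real.log (2*R - x)) - ψ 0 * Real.log |x|
          = F x + (ψ x - ψ 0) * Real.log |x| - ψ x * Real.log |x - 2*R| := by
        rw [abs_of_pos hxpos, abs_of_neg (by linarith : x - 2*R < 0),
          show -(x - 2*R) = 2*R - x by ring]
        ring
      refine Tendsto.congr' hev2.symm ?_
      rw [← hvg]
      exact (hDCT.add_const _).sub_const _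
    · -- case 2R ≤ x
      have hψx : ψ x = 0 := hψR x (by linarith)
      have hev : (fun ε : ℝ =>
          (∫ s in {s : ℝ | 0 ≤ s ∧ ε < |s - x|}, ψ s / (x - s)) - ψ 0 * Real.log |x|)
          =ᶠ[nhdsWithin (0:ℝ) (Set.Ioi 0)]
          (fun _ => F x - ψ 0 * Real.log |x|) := by
        filter_upwards [Ioo_mem_nhdsGT (show (0:ℝ) < x - R by linarith)] with ε hε
        obtain ⟨hε0, hεxR⟩ := hε
        congr 1
        have hind2 : ∀ s : ℝ,
            (Set.Icc 0 (2*R) ∩ {s : ℝ | ε < |s - x|}).indicator (fun s => ψ s / (x - s)) s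
              = (Set.Icc 0 (2*R)).indicator (fun s => ψ s / (x - s)) s := by
          intro s
          rcases eq_or_ne (ψ s) 0 with h0 | h0
          · simp only [Set.indicator_apply]; split_ifs <;> simp [h0]
          · have hsR : s < R := by by_contra h; exact h0 (hψR s (not_lt.1 h))
            have hmem : s ∈ Set.Icc (0:ℝ) (2*R) ∩ {s : ℝ | ε < |s - x|}
                ↔ s ∈ Set.Icc (0:ℝ) (2*R) := by
              constructor
              · exact fun h => h.1
              · intro h
                refine ⟨h, ?_⟩
                show ε < |s - x|
                rw [abs_sub_comm, abs_of_pos (by linarith : (0:ℝ) < x - s)]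
                linarith
            rw [Set.indicator_apply, Set.indicator_apply, if_congr hmem rfl rfl]
        calc ∫ s in {s : ℝ | 0 ≤ s ∧ ε < |s - x|}, ψ s / (x - s)
            = ∫ s, (Set.Ici 0 ∩ {s : ℝ | ε < |s - x|}).indicator (fun s => ψ s / (x - s)) s := by
              rw [hSU ε, ← integral_indicator (measurableSet_Ici.inter (hUmeas ε))]
          _ = ∫ s, (Set.Icc 0 (2*R) ∩ {s : ℝ | ε < |s - x|}).indicator
                (fun s => ψ s / (x - s)) s := by
              rw [funext (hind {s : ℝ | ε < |s - x|})]
          _ = ∫ s, (Set.Icc 0 (2*R)).indicator (fun s => ψ s / (x - s)) s := by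
              rw [funext hind2]
          _ = ∫ s in Set.Icc (0:ℝ) (2*R), ψ s / (x - s) := integral_indicator measurableSet_Icc
          _ = F x := by
              rw [hFdef]
              exact setIntegral_congr_fun measurableSet_Icc fun s _ => by
                rw [hK]; dsimp only; rw [hψx, sub_zero]
      have hvg : F x - ψ 0 * Real.log |x| =
          F x + (ψ x - ψ 0) * Real.log |x| - ψ x * Real.log |x - 2*R| := by
        rw [hψx]; ring
      exact Tendsto.congr' hev.symm (hvg ▸ tendsto_const_nhds)
end
end

section
/- Core of Lemma 6.1 (L3) (Hilbert transform of the inverse square root): (i) For every x < 0, the convergent improper integral satisfies ∫_0^∞ s^{−1/2}/(x − s) ds = −π (−x)^{−1/2}. (ii) For every x > 0, lim_{ε→0⁺} ∫_{{s > 0, |s − x| > ε}} s^{−1/2}/(x − s) ds = 0. Consequently, H(s ↦ s₊^{−1/2})(x) = −x₋^{−1/2} for all x ≠ 0, where x₋^{−1/2} equals (−x)^{−1/2} for x < 0 and 0 for x > 0. -/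
open MeasureTheory Real Filter

/-!
For `x < 0` the integrand has the primitive `-(2/√(-x)) arctan (√s/√(-x))`, which vanishes at `0`
and tends to `-π/√(-x)` at infinity. For `x > 0` the function
`(√x)⁻¹ (2 log (√s + √x) - log |s - x|)` is a primitive on both sides of `x`, vanishing at `0`
and at infinity; the principal-value integral is the difference of its values at `x - ε` and
`x + ε`, where the singular terms `log ε` cancel and what remains is continuous in `ε` and zero
at `ε = 0`.
-/

open Set Topology

section PrincipalValue

variable {f F : ℝ → ℝ} {c ε : ℝ}

lemma setOf_pos_and_lt_abs_sub_eq_union (h : 0 ≤ c + ε) :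
    {s : ℝ | 0 < s ∧ ε < |s - c|} = Ioo 0 (c - ε) ∪ Ioi (c + ε) := by
  ext s
  simp only [mem_ofPred_eq, mem_union, mem_Ioo, mem_Ioi, lt_abs]
  constructor
  · rintro ⟨hs, h' | h'⟩
    · exact Or.inr (by linarith)
    · exact Or.inl ⟨hs, by linarith⟩
  · rintro (⟨hs, h'⟩ | h')
    · exact ⟨hs, Or.inr (by linarith)⟩
    · exact ⟨by linarith, Or.inl (by linarith)⟩

lemma setOf_pos_and_lt_abs_sub_eq_Ioi (h : ε ≤ -c) :
    {s : ℝ | 0 < s ∧ ε < |s - c|} = Ioi 0 := by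
  ext s
  simp only [mem_ofPred_eq, mem_Ioi, and_iff_left_iff_imp]
  intro hs
  exact h.trans_lt ((by linarith : -c < s - c).trans_le (le_abs_self _))

theorem integral_pos_and_lt_abs_sub_eq_of_hasDerivAt (hε : 0 < ε) (hεc : ε < c)
    (hcont : ContinuousOn F (Ico 0 c)) (hderiv : ∀ s, 0 < s → s ≠ c → HasDerivAt F (f s) s)
    (hleft : ∀ s ∈ Ioo 0 c, 0 ≤ f s) (hright : ∀ s ∈ Ioi c, f s ≤ 0)
    (hlim : Tendsto F atTop (𝓝 0)) :
    ∫ s in {s : ℝ | 0 < s ∧ ε < |s - c|}, f s = F (c - ε) - F 0 - F (c + ε) := by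
  have hcε : 0 ≤ c - ε := by linarith
  have hcont' : ContinuousOn F (Icc 0 (c - ε)) :=
    hcont.mono fun s hs => ⟨hs.1, by linarith [hs.2]⟩
  have hderiv_left : ∀ s ∈ Ioo 0 (c - ε), HasDerivAt F (f s) s :=
    fun s hs => hderiv s hs.1 (by linarith [hs.2])
  have hderiv_right : ∀ s ∈ Ici (c + ε), HasDerivAt F (f s) s :=
    fun s hs => hderiv s (by linarith [hs.out]) (by linarith [hs.out])
  have hleft' : ∀ s ∈ Ioo 0 (c - ε), 0 ≤ f s :=
    fun s hs => hleft s ⟨hs.1, by linarith [hs.2]⟩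
  have hright' : ∀ s ∈ Ioi (c + ε), f s ≤ 0 :=
    fun s hs => hright s (by linarith [hs.out] : c < s)
  have hint_left : IntegrableOn f (Ioc 0 (c - ε)) :=
    intervalIntegral.integrableOn_deriv_of_nonneg hcont' hderiv_left hleft'
  have hval_left : ∫ s in Ioo 0 (c - ε), f s = F (c - ε) - F 0 := by
    rw [← integral_Ioc_eq_integral_Ioo, ← intervalIntegral.integral_of_le hcε]
    exact intervalIntegral.integral_eq_sub_of_hasDeriv_right_of_le hcε hcont'
      (fun s hs => (hderiv_left s hs).hasDerivWithinAt)
      ((intervalIntegrable_iff_integrableOn_Ioc_of_le hcε).2 hint_left)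
  have hdisj : Disjoint (Ioo 0 (c - ε)) (Ioi (c + ε)) :=
    Set.disjoint_left.2 fun s hs hs' => by linarith [hs.2, hs'.out]
  rw [setOf_pos_and_lt_abs_sub_eq_union (by linarith),
    setIntegral_union hdisj measurableSet_Ioi (hint_left.mono_set Ioo_subset_Ioc_self)
      (integrableOn_Ioi_deriv_of_nonpos' hderiv_right hright' hlim),
    hval_left, integral_Ioi_of_hasDerivAt_of_nonpos' hderiv_right hright' hlim]
  ring

end PrincipalValue

section NegativePoint

variable {x : ℝ}

lemma hasDerivAt_arctan_sqrt_div (hx : x < 0) {s : ℝ} (hs : 0 < s) :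
    HasDerivAt (fun t => -(2 / √(-x)) * arctan (√t / √(-x))) ((√s)⁻¹ / (x - s)) s := by
  set a := √(-x)
  have ha : 0 < a := Real.sqrt_pos.2 (by linarith)
  have hxa : x = -a ^ 2 := by rw [Real.sq_sqrt (by linarith)]; ring
  have hss : √s ^ 2 = s := Real.sq_sqrt hs.le
  have hsqrt : 0 < √s := Real.sqrt_pos.2 hs
  refine ((((Real.hasDerivAt_sqrt hs.ne').div_const a).arctan).const_mul _).congr_deriv ?_
  rw [hxa]
  have : -a ^ 2 - s ≠ 0 := by nlinarith
  field_simp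
  nlinarith

lemma tendsto_arctan_sqrt_div_atTop (hx : x < 0) :
    Tendsto (fun t => -(2 / √(-x)) * arctan (√t / √(-x))) atTop (𝓝 (-π * (√(-x))⁻¹)) := by
  have ha : 0 < √(-x) := Real.sqrt_pos.2 (by linarith)
  rw [show -π * (√(-x))⁻¹ = -(2 / √(-x)) * (π / 2) by field_simp]
  exact ((tendsto_arctan_atTop.mono_right nhdsWithin_le_nhds).comp
    (tendsto_sqrt_atTop.atTop_div_const ha)).const_mul _

lemma inv_sqrt_div_sub_nonpos_of_neg (hx : x < 0) {s : ℝ} (hs : 0 < s) :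
    (√s)⁻¹ / (x - s) ≤ 0 :=
  div_nonpos_of_nonneg_of_nonpos (inv_nonneg.2 (Real.sqrt_nonneg s)) (by linarith)

theorem integrableOn_inv_sqrt_div_sub_of_neg (hx : x < 0) :
    IntegrableOn (fun s => (√s)⁻¹ / (x - s)) (Ioi 0) :=
  integrableOn_Ioi_deriv_of_nonpos (by fun_prop) (fun _ hs => hasDerivAt_arctan_sqrt_div hx hs)
    (fun _ hs => inv_sqrt_div_sub_nonpos_of_neg hx hs) (tendsto_arctan_sqrt_div_atTop hx)

theorem integral_inv_sqrt_div_sub_of_neg (hx : x < 0) :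
    ∫ s in Ioi 0, (√s)⁻¹ / (x - s) = -π * (√(-x))⁻¹ := by
  rw [integral_Ioi_of_hasDerivAt_of_nonpos (by fun_prop)
    (fun _ hs => hasDerivAt_arctan_sqrt_div hx hs)
    (fun _ hs => inv_sqrt_div_sub_nonpos_of_neg hx hs) (tendsto_arctan_sqrt_div_atTop hx)]
  simp

end NegativePoint

section PositivePoint

variable {x : ℝ}

/-- `Real.log` is `log |·|`, so this single primitive serves on both sides of `x`. -/
lemma hasDerivAt_log_sqrt_add_sub_log_sub (hx : 0 < x) {s : ℝ} (hs : 0 < s) (hsx : s ≠ x) :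
    HasDerivAt (fun t => (√x)⁻¹ * (2 * log (√t + √x) - log (t - x))) ((√s)⁻¹ / (x - s)) s := by
  have hsqrt : 0 < √s := Real.sqrt_pos.2 hs
  have hb : 0 < √x := Real.sqrt_pos.2 hx
  have hsub : s - x ≠ 0 := sub_ne_zero.2 hsx
  refine (((((Real.hasDerivAt_sqrt hs.ne').add_const (√x)).log (by positivity)).const_mul 2).sub
    (((hasDerivAt_id s).sub_const x).log hsub)).const_mul _ |>.congr_deriv ?_
  have hss : √s ^ 2 = s := Real.sq_sqrt hs.le
  have hxx : √x ^ 2 = x := Real.sq_sqrt hx.le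
  field_simp
  rw [id, show x - s = -(s - x) by ring]
  field_simp
  linear_combination hss - hxx

lemma tendsto_log_sqrt_add_sub_log_sub_atTop :
    Tendsto (fun t => (√x)⁻¹ * (2 * log (√t + √x) - log (t - x))) atTop (𝓝 0) := by
  have hsqrt := (tendsto_log_comp_add_sub_log (√x)).comp tendsto_sqrt_atTop
  have hsub := tendsto_log_comp_add_sub_log (-x)
  have := ((hsqrt.const_mul 2).sub hsub).const_mul (√x)⁻¹
  simp only [mul_zero, sub_zero] at this
  refine this.congr' ?_
  filter_upwards [eventually_gt_atTop 0] with t ht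
  simp only [Function.comp_apply, Real.log_sqrt ht.le, ← sub_eq_add_neg]
  ring

lemma continuousOn_log_sqrt_add_sub_log_sub (hx : 0 < x) :
    ContinuousOn (fun t => (√x)⁻¹ * (2 * log (√t + √x) - log (t - x))) (Ico 0 x) := by
  have hb : 0 < √x := Real.sqrt_pos.2 hx
  refine continuousOn_const.mul (continuousOn_const.mul ?_ |>.sub ?_)
  · exact (by fun_prop : Continuous fun t => √t + √x).continuousOn.log
      fun t _ => by positivity
  · exact (continuous_id.sub continuous_const).continuousOn.log
      fun t ht => sub_ne_zero.2 ht.2.ne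

lemma integral_pos_and_lt_abs_sub_inv_sqrt_div_sub (hx : 0 < x) {ε : ℝ} (hε : 0 < ε)
    (hεx : ε < x) :
    ∫ s in {s : ℝ | 0 < s ∧ ε < |s - x|}, (√s)⁻¹ / (x - s) =
      2 * (√x)⁻¹ * (log (√(x - ε) + √x) - log (√(x + ε) + √x)) := by
  rw [integral_pos_and_lt_abs_sub_eq_of_hasDerivAt hε hεx
    (continuousOn_log_sqrt_add_sub_log_sub hx)
    (fun s hs hsx => hasDerivAt_log_sqrt_add_sub_log_sub hx hs hsx)
    (fun s hs => div_nonneg (inv_nonneg.2 (Real.sqrt_nonneg s)) (by linarith [hs.2]))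
    (fun s hs => div_nonpos_of_nonneg_of_nonpos (inv_nonneg.2 (Real.sqrt_nonneg s))
      (by linarith [hs.out]))
    tendsto_log_sqrt_add_sub_log_sub_atTop]
  simp only [Real.sqrt_zero, zero_add, zero_sub, Real.log_neg_eq_log, Real.log_sqrt hx.le,
    sub_sub_cancel_left, add_sub_cancel_left]
  ring

theorem tendsto_integral_pos_and_lt_abs_sub_inv_sqrt_div_sub (hx : 0 < x) :
    Tendsto (fun ε => ∫ s in {s : ℝ | 0 < s ∧ ε < |s - x|}, (√s)⁻¹ / (x - s))
      (𝓝[>] 0) (𝓝 0) := by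
  have hb : 0 < √x := Real.sqrt_pos.2 hx
  have hcont : ContinuousAt
      (fun ε => 2 * (√x)⁻¹ * (log (√(x - ε) + √x) - log (√(x + ε) + √x))) 0 := by
    refine continuousAt_const.mul (ContinuousAt.sub ?_ ?_) <;>
      refine ContinuousAt.log (by fun_prop) ?_ <;> simp [ne_of_gt (add_pos hb hb)]
  have := hcont.tendsto.mono_left (nhdsWithin_le_nhds (s := Ioi 0))
  simp only [sub_zero, add_zero, sub_self, mul_zero] at this
  refine this.congr' ?_
  filter_upwards [Ioo_mem_nhdsGT hx] with ε hε
  exact (integral_pos_and_lt_abs_sub_inv_sqrt_div_sub hx hε.1 hε.2).symm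

end PositivePoint

/-- Core of Lemma 6.1 (L3) (Hilbert transform of the inverse square root):
(i) for `x < 0`, `∫_0^∞ s^{−1/2}/(x−s) ds = −π(−x)^{−1/2}` (the integral being
convergent); (ii) for `x > 0`, the principal value
`lim_{ε→0⁺} ∫_{{s>0, |s−x|>ε}} s^{−1/2}/(x−s) ds = 0`.  Consequently
`H(s ↦ s₊^{−1/2})(x) = −x₋^{−1/2}` for all `x ≠ 0`, where
`Hg(x) = (1/π) pv ∫ g(s)/(x−s) ds`. -/
theorem hilbert_of_inv_sqrt :
    (∀ x : ℝ, x < 0 →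
      IntegrableOn (fun s : ℝ => (Real.sqrt s)⁻¹ / (x - s)) (Set.Ioi 0) volume ∧
        ∫ s in Set.Ioi (0:ℝ), (Real.sqrt s)⁻¹ / (x - s) = -π * (Real.sqrt (-x))⁻¹) ∧
    (∀ x : ℝ, 0 < x →
      Filter.Tendsto
        (fun ε : ℝ => ∫ s in {s : ℝ | 0 < s ∧ ε < |s - x|}, (Real.sqrt s)⁻¹ / (x - s))
        (nhdsWithin 0 (Set.Ioi 0)) (nhds 0)) ∧
    (∀ x : ℝ, x ≠ 0 →
      Filter.Tendsto
        (fun ε : ℝ => (1 / π) * ∫ s in {s : ℝ | 0 < s ∧ ε < |s - x|}, (Real.sqrt s)⁻¹ / (x - s))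
        (nhdsWithin 0 (Set.Ioi 0))
        (nhds (if x < 0 then -(Real.sqrt (-x))⁻¹ else 0))) := by
  refine ⟨fun x hx => ⟨integrableOn_inv_sqrt_div_sub_of_neg hx,
    integral_inv_sqrt_div_sub_of_neg hx⟩,
    fun x hx => tendsto_integral_pos_and_lt_abs_sub_inv_sqrt_div_sub hx, fun x hx => ?_⟩
  rcases hx.lt_or_gt with hx | hx
  · rw [if_pos hx]
    refine tendsto_const_nhds.congr' ?_
    filter_upwards [Ioo_mem_nhdsGT (neg_pos.2 hx)] with ε hε
    rw [setOf_pos_and_lt_abs_sub_eq_Ioi hε.2.le, integral_inv_sqrt_div_sub_of_neg hx]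
    field_simp
  · simpa [if_neg hx.not_gt] using
      (tendsto_integral_pos_and_lt_abs_sub_inv_sqrt_div_sub hx).const_mul (1 / π)
end

section
/- Proposition A.2, forward direction: Let B ≥ 0 and let (f_h)_{h∈(0,1]} be a family of smooth 2π-periodic functions ℝ → ℂ. Suppose there exist χ₁, χ₂ ∈ C_c^∞(ℝ) whose periodizations form a partition of unity, Σ_{k∈ℤ} (χ₁(φ − 2πk) + χ₂(φ − 2πk)) = 1 for all φ ∈ ℝ, such that for i = 1, 2 and for every B′ > B and every N there is C with |∫_ℝ e^{−i φ ξ/h} χ_i(φ) f_h(φ) dφ| ≤ C h^N (1 + |ξ|)^{−N} for all h ∈ (0,1] and all |ξ| ≥ B′. Then for every B′ > B and every N there is C such that the Fourier coefficients satisfy |∫_0^{2π} e^{−i n φ} f_h(φ) dφ| ≤ C (1 + |n|)^{−N} for all h ∈ (0,1] and all integers n with |n| ≥ B′/h. -/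
open MeasureTheory Real intervalIntegral

noncomputable section

/-- The semiclassical Fourier transform `𝓕_h g(ξ) = ∫ e^{−i x ξ/h} g(x) dx`. -/
def FTh (h : ℝ) (g : ℝ → ℂ) (ξ : ℝ) : ℂ :=
  ∫ x : ℝ, Complex.exp (-(Complex.I * (x : ℂ) * (ξ : ℂ) / (h : ℂ))) * g x

lemma unfolding_aux (χ₁ χ₂ g : ℝ → ℂ)
    (h1c : Continuous χ₁) (h1s : HasCompactSupport χ₁)
    (h2c : Continuous χ₂) (h2s : HasCompactSupport χ₂)
    (hgc : Continuous g) (hper : Function.Periodic g (2 * π))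
    (hpart : ∀ φ : ℝ, ∑' k : ℤ, (χ₁ (φ - 2 * π * k) + χ₂ (φ - 2 * π * k)) = 1) :
    ∫ φ in (0:ℝ)..(2 * π), g φ = (∫ φ : ℝ, χ₁ φ * g φ) + ∫ φ : ℝ, χ₂ φ * g φ := by
  obtain ⟨R₁, hR₁⟩ := h1s.isBounded.subset_closedBall 0
  obtain ⟨R₂, hR₂⟩ := h2s.isBounded.subset_closedBall 0
  set R : ℝ := max (max R₁ R₂) 0 with hRdef
  have hR0 : 0 ≤ R := le_max_right _ _
  have hvan1 : ∀ x : ℝ, R < |x| → χ₁ x = 0 := by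
    intro x hx
    by_contra hne
    have hx1 : x ∈ Metric.closedBall (0:ℝ) R₁ := hR₁ (subset_tsupport _ hne)
    have : |x| ≤ R₁ := by simpa [Real.dist_eq] using hx1
    have : |x| ≤ R := this.trans ((le_max_left _ _).trans (le_max_left _ _))
    linarith
  have hvan2 : ∀ x : ℝ, R < |x| → χ₂ x = 0 := by
    intro x hx
    by_contra hne
    have hx1 : x ∈ Metric.closedBall (0:ℝ) R₂ := hR₂ (subset_tsupport _ hne)
    have : |x| ≤ R₂ := by simpa [Real.dist_eq] using hx1
    have : |x| ≤ R := this.trans ((le_max_right _ _).trans (le_max_left _ _))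
    linarith
  have hπ := Real.two_pi_pos
  set K : ℕ := ⌈(R + 2 * π) / (2 * π)⌉₊ + 1 with hKdef
  have hK : R + 2 * π ≤ 2 * π * K := by
    have h1 : (R + 2 * π) / (2 * π) ≤ (K : ℝ) := by
      have := Nat.le_ceil ((R + 2 * π) / (2 * π))
      have : ((⌈(R + 2 * π) / (2 * π)⌉₊ : ℝ)) ≤ (K : ℝ) := by
        rw [hKdef]; push_cast; linarith
      linarith [Nat.le_ceil ((R + 2 * π) / (2 * π))]
    calc R + 2 * π = ((R + 2 * π) / (2 * π)) * (2 * π) := by field_simp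
    _ ≤ (K : ℝ) * (2 * π) := by nlinarith
    _ = 2 * π * K := by ring
  set a : ℕ → ℝ := fun j => 2 * π * ((j : ℝ) - (K : ℝ)) with hadef
  have ha0 : a 0 = -(2 * π * K) := by simp only [hadef]; push_cast; ring
  have haK : a (2 * K) = 2 * π * K := by simp only [hadef]; push_cast; ring
  -- step: unfold each compactly supported integral into a finite sum of integrals over [0,2π]
  have step : ∀ χ : ℝ → ℂ, Continuous χ → (∀ x : ℝ, R < |x| → χ x = 0) →
      (∫ φ : ℝ, χ φ * g φ)
        = ∑ j ∈ Finset.range (2 * K), ∫ x in (0:ℝ)..(2 * π), χ (x + a j) * g x := by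
    intro χ hχc hχv
    have hsupp : Function.support (fun φ => χ φ * g φ) ⊆ Set.Ioc (a 0) (a (2 * K)) := by
      intro x hx
      have hχx : χ x ≠ 0 := by
        intro h0; apply hx; simp [h0]
      have hxr : |x| ≤ R := by
        by_contra hc
        exact hχx (hχv x (lt_of_not_ge hc))
      rw [ha0, haK]
      constructor
      · have := abs_le.mp hxr
        nlinarith [this.1]
      · have := abs_le.mp hxr
        nlinarith [this.2]
    have hint : ∀ (i : ℕ), i < 2 * K → IntervalIntegrable (fun φ => χ φ * g φ) volume (a i) (a (i+1)) :=
      fun i _ => (hχc.mul hgc).intervalIntegrable _ _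
    rw [← intervalIntegral.integral_eq_integral_of_support_subset hsupp,
      ← intervalIntegral.sum_integral_adjacent_intervals hint]
    refine Finset.sum_congr rfl fun j _ => ?_
    have hshift : (∫ x in (0:ℝ)..(2 * π), χ (x + a j) * g (x + a j))
        = ∫ x in (a j)..(a (j+1)), χ x * g x := by
      have := intervalIntegral.integral_comp_add_right (a := (0:ℝ)) (b := 2 * π)
        (fun x => χ x * g x) (a j)
      rw [this]
      congr 1
      · simp
      · rw [hadef]; push_cast; ring
    rw [← hshift]
    refine intervalIntegral.integral_congr fun x _ => ?_
    have hgp : g (x + a j) = g x := by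
      have h1 : a j = ((j : ℤ) - (K : ℤ)) • (2 * π) := by
        rw [hadef, zsmul_eq_mul]; push_cast; ring
      rw [h1]
      exact (hper.zsmul _) x
    rw [hgp]
  rw [step χ₁ h1c hvan1, step χ₂ h2c hvan2]
  have hii : ∀ (χ : ℝ → ℂ), Continuous χ → ∀ j : ℕ,
      IntervalIntegrable (fun x => χ (x + a j) * g x) volume 0 (2 * π) :=
    fun χ hχc j => ((hχc.comp (continuous_id.add continuous_const)).mul hgc).intervalIntegrable _ _
  have e1 : (∑ j ∈ Finset.range (2 * K), ∫ x in (0:ℝ)..(2 * π), χ₁ (x + a j) * g x)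
      = ∫ x in (0:ℝ)..(2 * π), ∑ j ∈ Finset.range (2 * K), χ₁ (x + a j) * g x :=
    (intervalIntegral.integral_finset_sum (fun j _ => hii χ₁ h1c j)).symm
  have e2 : (∑ j ∈ Finset.range (2 * K), ∫ x in (0:ℝ)..(2 * π), χ₂ (x + a j) * g x)
      = ∫ x in (0:ℝ)..(2 * π), ∑ j ∈ Finset.range (2 * K), χ₂ (x + a j) * g x :=
    (intervalIntegral.integral_finset_sum (fun j _ => hii χ₂ h2c j)).symm
  have hA : IntervalIntegrable (fun x => ∑ j ∈ Finset.range (2 * K), χ₁ (x + a j) * g x)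
      volume 0 (2 * π) :=
    (continuous_finset_sum _ fun j _ =>
      (h1c.comp (continuous_id.add continuous_const)).mul hgc).intervalIntegrable _ _
  have hB : IntervalIntegrable (fun x => ∑ j ∈ Finset.range (2 * K), χ₂ (x + a j) * g x)
      volume 0 (2 * π) :=
    (continuous_finset_sum _ fun j _ =>
      (h2c.comp (continuous_id.add continuous_const)).mul hgc).intervalIntegrable _ _
  have e3 := (intervalIntegral.integral_add hA hB).symm
  rw [e1, e2, e3]
  refine (intervalIntegral.integral_congr fun x hx => ?_)
  rw [Set.uIcc_of_le (by positivity) ] at hx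
  obtain ⟨hx0, hx2⟩ := hx
  -- pointwise: the finite partition-of-unity sum is 1 on [0, 2π]
  have key : ∑ j ∈ Finset.range (2 * K), (χ₁ (x + a j) + χ₂ (x + a j)) = 1 := by
    have hvanZ : ∀ k : ℤ, k ∉ Finset.Icc (1 - (K:ℤ)) (K:ℤ) →
        (χ₁ (x - 2 * π * k) + χ₂ (x - 2 * π * k)) = 0 := by
      intro k hk
      have habs : R < |x - 2 * π * k| := by
        rcases not_and_or.mp ((Finset.mem_Icc).not.mp hk) |>.imp not_le.mp not_le.mp with hlt | hlt
        · -- k ≤ -K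
          have hk' : (k : ℝ) ≤ -(K:ℝ) := by
            have : (k : ℤ) ≤ -(K:ℤ) := by omega
            exact_mod_cast this
          have : x - 2 * π * k ≥ 2 * π * K := by nlinarith
          rw [abs_of_nonneg (by nlinarith)]
          nlinarith
        · -- K < k
          have hk' : (K:ℝ) + 1 ≤ (k : ℝ) := by exact_mod_cast hlt
          have : x - 2 * π * k ≤ -(R + 2*π) + 2*π - 2*π*1 + 2*π*1 - 2*π + x := by nlinarith
          rw [abs_of_nonpos (by nlinarith)]
          nlinarith
      rw [hvan1 _ habs, hvan2 _ habs, add_zero]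
    have hzsum := (tsum_eq_sum hvanZ).symm.trans (hpart x)
    rw [← hzsum]
    refine Finset.sum_nbij' (fun j => (K:ℤ) - j) (fun k => ((K:ℤ) - k).toNat) ?_ ?_ ?_ ?_ ?_
    · intro j hj
      simp only [Finset.mem_range] at hj
      simp only [Finset.mem_Icc]
      omega
    · intro k hk
      simp only [Finset.mem_Icc] at hk
      simp only [Finset.mem_range]
      omega
    · intro j hj; simp only [Finset.mem_range] at hj
      show (((K:ℤ) - ((K:ℤ) - (j:ℤ))).toNat) = j
      omega
    · intro k hk; simp only [Finset.mem_Icc] at hk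
      show (K:ℤ) - ((((K:ℤ) - k).toNat : ℕ) : ℤ) = k
      omega
    · intro j hj
      congr 2 <;>
      · congr 1
        rw [hadef]
        push_cast
        ring
  calc g x = (1:ℂ) * g x := by ring
  _ = (∑ j ∈ Finset.range (2 * K), (χ₁ (x + a j) + χ₂ (x + a j))) * g x := by rw [key]
  _ = ∑ j ∈ Finset.range (2 * K), (χ₁ (x + a j) * g x + χ₂ (x + a j) * g x) := by
      rw [Finset.sum_mul]; exact Finset.sum_congr rfl fun j _ => by ring
  _ = (∑ j ∈ Finset.range (2 * K), χ₁ (x + a j) * g x)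
      + ∑ j ∈ Finset.range (2 * K), χ₂ (x + a j) * g x := Finset.sum_add_distrib


/-- Proposition A.2, forward direction: if the localizations of a family of
smooth `2π`-periodic functions by the two charts of a partition of unity are
semiclassically band limited with band limit `B`, then for every `B′ > B` the
Fourier coefficients of `f_h` of order `|n| ≥ B′/h` are `O((1+|n|)^{−∞})`. -/
theorem circle_band_limit_coefficients (B : ℝ) (hB : 0 ≤ B)
    (f : ℝ → ℝ → ℂ)
    (hf_smooth : ∀ h ∈ Set.Ioc (0:ℝ) 1, ContDiff ℝ (⊤ : ℕ∞) (f h))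
    (hf_per : ∀ h ∈ Set.Ioc (0:ℝ) 1, Function.Periodic (f h) (2 * π))
    (χ₁ χ₂ : ℝ → ℂ)
    (hχ₁_smooth : ContDiff ℝ (⊤ : ℕ∞) χ₁) (hχ₁_supp : HasCompactSupport χ₁)
    (hχ₂_smooth : ContDiff ℝ (⊤ : ℕ∞) χ₂) (hχ₂_supp : HasCompactSupport χ₂)
    (hpart : ∀ φ : ℝ, ∑' k : ℤ, (χ₁ (φ - 2 * π * k) + χ₂ (φ - 2 * π * k)) = 1)
    (hband : ∀ χ ∈ ({χ₁, χ₂} : Set (ℝ → ℂ)), ∀ B' : ℝ, B < B' → ∀ N : ℕ, ∃ C : ℝ,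
      ∀ h ∈ Set.Ioc (0:ℝ) 1, ∀ ξ : ℝ, B' ≤ |ξ| →
        ‖FTh h (fun φ => χ φ * f h φ) ξ‖ ≤ C * h ^ N / (1 + |ξ|) ^ N) :
    ∀ B' : ℝ, B < B' → ∀ N : ℕ, ∃ C : ℝ,
      ∀ h ∈ Set.Ioc (0:ℝ) 1, ∀ n : ℤ, B' / h ≤ |(n : ℝ)| →
        ‖∫ φ in (0:ℝ)..(2 * π), Complex.exp (-(Complex.I * (n : ℂ) * (φ : ℂ))) * f h φ‖
          ≤ C / (1 + |(n : ℝ)|) ^ N := by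
  intro B' hB' N
  obtain ⟨C₁, hC₁⟩ := hband χ₁ (Or.inl rfl) B' hB' N
  obtain ⟨C₂, hC₂⟩ := hband χ₂ (Or.inr rfl) B' hB' N
  refine ⟨max C₁ 0 + max C₂ 0, ?_⟩
  intro h hh n hn
  obtain ⟨hh0, hh1⟩ := hh
  have hne : (h:ℂ) ≠ 0 := by exact_mod_cast hh0.ne'
  set g : ℝ → ℂ := fun φ => Complex.exp (-(Complex.I * (n : ℂ) * (φ : ℂ))) * f h φ with hgdef
  have hgc : Continuous g := by
    exact (Complex.continuous_exp.comp (by continuity)).mul (hf_smooth h ⟨hh0, hh1⟩).continuous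
  have hgper : Function.Periodic g (2 * π) := by
    intro φ
    simp only [hgdef]
    push_cast
    rw [show -(Complex.I * (n : ℂ) * ((φ:ℂ) + 2 * (π:ℂ)))
        = -(Complex.I * (n : ℂ) * (φ : ℂ)) + (-n : ℤ) * (2 * (π:ℂ) * Complex.I) by push_cast; ring,
      Complex.exp_add, Complex.exp_int_mul_two_pi_mul_I, mul_one, hf_per h ⟨hh0, hh1⟩ φ]
  have key := unfolding_aux χ₁ χ₂ g hχ₁_smooth.continuous hχ₁_supp hχ₂_smooth.continuous hχ₂_supp
      hgc hgper hpart
  have hF : ∀ χ : ℝ → ℂ, (∫ φ : ℝ, χ φ * g φ) = FTh h (fun φ => χ φ * f h φ) ((n:ℝ) * h) := by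
    intro χ
    unfold FTh
    refine integral_congr_ae (Filter.Eventually.of_forall fun x => ?_)
    simp only [hgdef]
    rw [show -(Complex.I * (x:ℂ) * (((n:ℝ) * h : ℝ) : ℂ) / (h:ℂ)) = -(Complex.I * (n:ℂ) * (x:ℂ)) by
      push_cast; field_simp]
    ring
  rw [key, hF χ₁, hF χ₂]
  have hξ : B' ≤ |(n:ℝ) * h| := by
    rw [abs_mul, abs_of_pos hh0]
    calc B' = (B' / h) * h := by field_simp
    _ ≤ |(n:ℝ)| * h := by nlinarith
  have hb1 := hC₁ h ⟨hh0, hh1⟩ ((n:ℝ) * h) hξ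
  have hb2 := hC₂ h ⟨hh0, hh1⟩ ((n:ℝ) * h) hξ
  have hd1 : (0:ℝ) < (1 + |(n:ℝ) * h|) ^ N := by positivity
  have hd2 : (0:ℝ) < (1 + |(n:ℝ)|) ^ N := by positivity
  have ht : h ^ N / (1 + |(n:ℝ) * h|) ^ N ≤ 1 / (1 + |(n:ℝ)|) ^ N := by
    rw [div_le_div_iff₀ hd1 hd2, one_mul, ← mul_pow]
    refine pow_le_pow_left₀ (by positivity) ?_ N
    rw [abs_mul, abs_of_pos hh0]
    nlinarith [abs_nonneg (n:ℝ)]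
  have hstep : ∀ C : ℝ, C * h ^ N / (1 + |(n:ℝ) * h|) ^ N ≤ max C 0 / (1 + |(n:ℝ)|) ^ N := by
    intro C
    have : C * h ^ N / (1 + |(n:ℝ) * h|) ^ N = C * (h ^ N / (1 + |(n:ℝ) * h|) ^ N) := by ring
    rw [this]
    calc C * (h ^ N / (1 + |(n:ℝ) * h|) ^ N) ≤ max C 0 * (h ^ N / (1 + |(n:ℝ) * h|) ^ N) := by
          apply mul_le_mul_of_nonneg_right (le_max_left _ _) (by positivity)
    _ ≤ max C 0 * (1 / (1 + |(n:ℝ)|) ^ N) :=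
          mul_le_mul_of_nonneg_left ht (le_max_right _ _)
    _ = max C 0 / (1 + |(n:ℝ)|) ^ N := by ring
  calc ‖FTh h (fun φ => χ₁ φ * f h φ) ((n:ℝ) * h) + FTh h (fun φ => χ₂ φ * f h φ) ((n:ℝ) * h)‖
      ≤ ‖FTh h (fun φ => χ₁ φ * f h φ) ((n:ℝ) * h)‖ + ‖FTh h (fun φ => χ₂ φ * f h φ) ((n:ℝ) * h)‖ :=
        norm_add_le _ _
    _ ≤ C₁ * h ^ N / (1 + |(n:ℝ) * h|) ^ N + C₂ * h ^ N / (1 + |(n:ℝ) * h|) ^ N := add_le_add hb1 hb2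
    _ ≤ max C₁ 0 / (1 + |(n:ℝ)|) ^ N + max C₂ 0 / (1 + |(n:ℝ)|) ^ N := add_le_add (hstep C₁) (hstep C₂)
    _ = (max C₁ 0 + max C₂ 0) / (1 + |(n:ℝ)|) ^ N := by ring
end
end

section
/- Multiplication by a smooth cutoff does not increase the semiclassical band limit: Let B ≥ 0 and let (g_h)_{h∈(0,1]} be a family of integrable functions on ℝ with ‖g_h‖_{L¹} ≤ C h^{−M} for some C, M, such that for every N there is C_N with |𝓕_h g_h(ξ)| ≤ C_N h^N (1 + |ξ|)^{−N} for all h and all |ξ| ≥ B. Then for every Schwartz function χ on ℝ and every B′ > B, for every N there is C′ such that |𝓕_h (χ g_h)(ξ)| ≤ C′ h^N (1 + |ξ|)^{−N} for all h ∈ (0,1] and all |ξ| ≥ B′. -/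
/-!
Mathlib's Fourier transform uses the kernel `e^{-2πixt}`, so Fourier inversion for `χ` and Fubini
give `𝓕_h(χ g)(ξ) = ∫ 𝓕χ(t) 𝓕_h g(ξ - 2πht) dt`. Where `|ξ - 2πht| ≥ B` the band-limit bound
applies, and Peetre's inequality `1 + |ξ| ≤ (1 + 2π)(1 + |t|)(1 + |ξ - 2πht|)` moves the weight
from `ξ - 2πht` to `ξ` at the price of a power of `1 + |t|`. Elsewhere `2πh|t| ≥ B' - B`, so
`h⁻¹ ≲ 1 + |t|` and the polynomial `L¹` bound `h^{-M}` becomes `h^N (1 + |ξ|)^{-N}` times a power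
of `1 + |t|`. The rapid decay of `𝓕χ` absorbs both powers of `1 + |t|`.
-/

open MeasureTheory Real

noncomputable section

open FourierTransform SchwartzMap

lemma norm_exp_neg_I_mul_mul_div (x ξ h : ℝ) :
    ‖Complex.exp (-(Complex.I * x * ξ / h))‖ = 1 := by
  rw [show -(Complex.I * x * ξ / h) = ((-(x * ξ / h) : ℝ) : ℂ) * Complex.I by push_cast; ring,
    Complex.norm_exp_ofReal_mul_I]

lemma norm_FTh_le (h : ℝ) (g : ℝ → ℂ) (ξ : ℝ) : ‖FTh h g ξ‖ ≤ ∫ x, ‖g x‖ := by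
  refine (norm_integral_le_integral_norm _).trans_eq ?_
  simp_rw [norm_mul, norm_exp_neg_I_mul_mul_div, one_mul]

lemma SchwartzMap.eq_integral_exp_mul_fourier (χ : 𝓢(ℝ, ℂ)) (x : ℝ) :
    χ x = ∫ t : ℝ, Complex.exp (↑(2 * π * (x * t)) * Complex.I) * 𝓕 χ t := by
  conv_lhs => rw [← fourierInv_fourier_eq (F := 𝓢(ℝ, ℂ)) χ, fourierInv_coe, Real.fourierInv_eq']
  simp [fourier_coe]

lemma SchwartzMap.integrable_one_add_norm_pow_mul {D V : Type*} [NormedAddCommGroup D]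
    [NormedSpace ℝ D] [MeasurableSpace D] [BorelSpace D] [SecondCountableTopology D]
    [NormedAddCommGroup V] [NormedSpace ℝ V] {μ : Measure D} [μ.HasTemperateGrowth]
    (f : 𝓢(D, V)) (k : ℕ) : Integrable (fun x ↦ (1 + ‖x‖) ^ k * ‖f x‖) μ := by
  refine ((f.integrable_pow_mul μ 0).add (f.integrable_pow_mul μ k)).const_mul (2 ^ (k - 1))
    |>.mono' (by fun_prop) (.of_forall fun x ↦ ?_)
  rw [Real.norm_of_nonneg (by positivity), Pi.add_apply, pow_zero, one_mul, ← one_add_mul,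
    ← mul_assoc]
  gcongr
  simpa using add_pow_le zero_le_one (norm_nonneg x) k

lemma FTh_schwartz_mul_eq_integral (χ : 𝓢(ℝ, ℂ)) {g : ℝ → ℂ} (hg : Integrable g) {h : ℝ}
    (hh : h ≠ 0) (ξ : ℝ) : FTh h (fun x ↦ χ x * g x) ξ = ∫ t, 𝓕 χ t * FTh h g (ξ - 2 * π * h * t) := by
  set e : ℝ → ℝ → ℂ := fun x t ↦ Complex.exp (-(Complex.I * x * ξ / h)) *
    (Complex.exp (↑(2 * π * (x * t)) * Complex.I) * 𝓕 χ t * g x)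
  have hint : Integrable (Function.uncurry e) (volume.prod volume) := by
    refine (hg.norm.mul_prod (𝓕 χ).integrable.norm).mono' ?_ (.of_forall fun p ↦ ?_)
    · exact (Continuous.aestronglyMeasurable (by fun_prop)).mul
        ((Continuous.aestronglyMeasurable (by fun_prop)).mul hg.1.comp_fst)
    · simp only [e, Function.uncurry, norm_mul, norm_exp_neg_I_mul_mul_div,
        Complex.norm_exp_ofReal_mul_I]
      rw [one_mul, one_mul, mul_comm]
  have hexp (x t : ℝ) : Complex.exp (-(Complex.I * x * ξ / h)) *
      Complex.exp (↑(2 * π * (x * t)) * Complex.I) =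
      Complex.exp (-(Complex.I * x * ↑(ξ - 2 * π * h * t) / h)) := by
    have hh' : (h : ℂ) ≠ 0 := mod_cast hh
    rw [← Complex.exp_add]
    congr 1
    push_cast
    field_simp
    ring
  calc FTh h (fun x ↦ χ x * g x) ξ = ∫ x, ∫ t, e x t := by
        unfold FTh
        congr 1 with x
        dsimp only
        rw [eq_integral_exp_mul_fourier χ x, ← integral_mul_const, ← integral_const_mul]
    _ = ∫ t, ∫ x, e x t := integral_integral_swap hint
    _ = _ := by
        congr 1 with t
        unfold FTh
        rw [← integral_const_mul]
        congr 1 with x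
        rw [← hexp]
        ring

lemma one_add_abs_add_mul_le (a s t : ℝ) :
    1 + |a + s * t| ≤ (1 + |s|) * (1 + |t|) * (1 + |a|) := by
  have := abs_add_le a (s * t)
  rw [abs_mul] at this
  nlinarith [abs_nonneg a, abs_nonneg s, abs_nonneg t, mul_nonneg (abs_nonneg a) (abs_nonneg s),
    mul_nonneg (abs_nonneg a) (abs_nonneg t),
    mul_nonneg (mul_nonneg (abs_nonneg a) (abs_nonneg s)) (abs_nonneg t)]

lemma one_add_abs_le_mul_one_add_abs_sub {h : ℝ} (hh : h ∈ Set.Icc (0 : ℝ) 1) (ξ t : ℝ) :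
    1 + |ξ| ≤ (1 + 2 * π) * (1 + |t|) * (1 + |ξ - 2 * π * h * t|) := by
  have h2πh : |2 * π * h| ≤ 2 * π := by
    rw [abs_of_nonneg (by have := hh.1; positivity)]
    nlinarith [pi_pos, hh.2]
  calc 1 + |ξ| = 1 + |(ξ - 2 * π * h * t) + 2 * π * h * t| := by ring_nf
    _ ≤ (1 + |2 * π * h|) * (1 + |t|) * (1 + |ξ - 2 * π * h * t|) := one_add_abs_add_mul_le _ _ _
    _ ≤ _ := by gcongr

lemma inv_pow_le_div_pow_of_le_mul {a b c : ℝ} {n : ℕ} (ha : 0 < a) (hb : 0 < b)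
    (hab : b ≤ c * a) : (a ^ n)⁻¹ ≤ c ^ n / b ^ n := by
  rw [← inv_pow, ← div_pow]
  gcongr
  rwa [le_div_iff₀ hb, inv_mul_le_iff₀ ha, mul_comm]

lemma norm_le_outside_band {z : ℂ} {C h ξ t : ℝ} {N : ℕ} (hh : h ∈ Set.Icc (0 : ℝ) 1)
    (hz : ‖z‖ ≤ C * h ^ N / (1 + |ξ - 2 * π * h * t|) ^ N) :
    ‖z‖ ≤ |C| * (1 + 2 * π) ^ N * (h ^ N / (1 + |ξ|) ^ N) * (1 + |t|) ^ N := by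
  have hh0 := hh.1
  calc ‖z‖ ≤ |C| * h ^ N * ((1 + |ξ - 2 * π * h * t|) ^ N)⁻¹ := by
        rw [← div_eq_mul_inv]; exact hz.trans (by gcongr; exact le_abs_self C)
    _ ≤ |C| * h ^ N * (((1 + 2 * π) * (1 + |t|)) ^ N / (1 + |ξ|) ^ N) := by
        gcongr
        exact inv_pow_le_div_pow_of_le_mul (by positivity) (by positivity)
          (one_add_abs_le_mul_one_add_abs_sub hh ξ t)
    _ = _ := by rw [mul_pow]; ring

/-- `1 + |B|` rather than `1 + B` keeps the constant nonnegative when `B < 0`, where this case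
is empty. -/
lemma norm_le_inside_band {z : ℂ} {B B' C h ξ t : ℝ} {N M : ℕ} (hh : h ∈ Set.Ioc (0 : ℝ) 1)
    (hBB' : B < B') (hξ : B' ≤ |ξ|) (hη : |ξ - 2 * π * h * t| < B) (hz : ‖z‖ ≤ C / h ^ M) :
    ‖z‖ ≤ |C| * (2 * π / (B' - B)) ^ (N + M) * ((1 + 2 * π) * (1 + |B|)) ^ N *
      (h ^ N / (1 + |ξ|) ^ N) * (1 + |t|) ^ (2 * N + M) := by
  have hh0 := hh.1
  have hδ : 0 < B' - B := sub_pos.mpr hBB'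
  have hh_lower : 1 ≤ 2 * π / (B' - B) * (1 + |t|) * h := by
    have : |ξ| - |ξ - 2 * π * h * t| ≤ 2 * π * h * |t| :=
      calc _ ≤ |ξ - (ξ - 2 * π * h * t)| := abs_sub_abs_le_abs_sub _ _
        _ = _ := by rw [sub_sub_cancel, abs_mul, abs_of_pos (by positivity)]
    rw [div_mul_eq_mul_div, div_mul_eq_mul_div, one_le_div hδ]
    nlinarith [abs_nonneg t]
  have hξ_upper : 1 + |ξ| ≤ (1 + 2 * π) * (1 + |t|) * (1 + |B|) * 1 := by
    rw [mul_one]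
    exact (one_add_abs_le_mul_one_add_abs_sub (Set.Ioc_subset_Icc_self hh) ξ t).trans
      (mul_le_mul_of_nonneg_left (by linarith [le_abs_self B]) (by positivity))
  calc ‖z‖ ≤ |C| * (h ^ M)⁻¹ * (1 ^ N)⁻¹ := by
        rw [one_pow, inv_one, mul_one, ← div_eq_mul_inv]
        exact hz.trans (by gcongr; exact le_abs_self C)
    _ ≤ |C| * (h ^ N * ((2 * π / (B' - B) * (1 + |t|)) ^ (N + M) / 1 ^ (N + M))) *
          (((1 + 2 * π) * (1 + |t|) * (1 + |B|)) ^ N / (1 + |ξ|) ^ N) := by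
        gcongr
        · calc (h ^ M)⁻¹ = h ^ N * (h ^ (N + M))⁻¹ := by
                rw [pow_add, mul_inv, ← mul_assoc, mul_inv_cancel₀ (by positivity), one_mul]
            _ ≤ _ := by gcongr; exact inv_pow_le_div_pow_of_le_mul hh0 one_pos hh_lower
        · exact inv_pow_le_div_pow_of_le_mul one_pos (by positivity) hξ_upper
    _ = _ := by simp only [mul_pow]; ring

lemma norm_apply_sub_le_of_band_bounds {F : ℝ → ℂ} {B B' C₁ C₂ h ξ : ℝ} {N M : ℕ}
    (hh : h ∈ Set.Ioc (0 : ℝ) 1) (hBB' : B < B') (hξ : B' ≤ |ξ|)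
    (hband : ∀ η, B ≤ |η| → ‖F η‖ ≤ C₁ * h ^ N / (1 + |η|) ^ N)
    (hL1 : ∀ η, ‖F η‖ ≤ C₂ / h ^ M) (t : ℝ) :
    ‖F (ξ - 2 * π * h * t)‖ ≤ (|C₁| * (1 + 2 * π) ^ N +
      |C₂| * (2 * π / (B' - B)) ^ (N + M) * ((1 + 2 * π) * (1 + |B|)) ^ N) *
      (h ^ N / (1 + |ξ|) ^ N) * (1 + |t|) ^ (2 * N + M) := by
  have hh0 := hh.1
  rcases le_or_gt B |ξ - 2 * π * h * t| with hη | hη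
  · have hfar : 0 ≤ |C₂| * (2 * π / (B' - B)) ^ (N + M) * ((1 + 2 * π) * (1 + |B|)) ^ N := by
      have : 0 < B' - B := sub_pos.mpr hBB'
      positivity
    calc _ ≤ |C₁| * (1 + 2 * π) ^ N * (h ^ N / (1 + |ξ|) ^ N) * (1 + |t|) ^ N :=
          norm_le_outside_band (Set.Ioc_subset_Icc_self hh) (hband _ hη)
      _ ≤ _ := by
          gcongr
          · exact le_add_of_nonneg_right hfar
          · linarith [abs_nonneg t]
          · omega
  · calc _ ≤ |C₂| * (2 * π / (B' - B)) ^ (N + M) * ((1 + 2 * π) * (1 + |B|)) ^ N *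
          (h ^ N / (1 + |ξ|) ^ N) * (1 + |t|) ^ (2 * N + M) :=
          norm_le_inside_band hh hBB' hξ hη (hL1 _)
      _ ≤ _ := by
          gcongr
          exact le_add_of_nonneg_left (by positivity)

lemma SchwartzMap.norm_integral_mul_le {D : Type*} [NormedAddCommGroup D] [NormedSpace ℝ D]
    [MeasurableSpace D] [BorelSpace D] [SecondCountableTopology D] {μ : Measure D}
    [μ.HasTemperateGrowth] {F : D → ℂ} {c : ℝ} {k : ℕ} (φ : 𝓢(D, ℂ))
    (hF : ∀ t, ‖F t‖ ≤ c * (1 + ‖t‖) ^ k) :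
    ‖∫ t, φ t * F t ∂μ‖ ≤ c * ∫ t, (1 + ‖t‖) ^ k * ‖φ t‖ ∂μ := by
  rw [← integral_const_mul]
  refine (norm_integral_le_integral_norm _).trans <| integral_mono_of_nonneg
    (.of_forall fun _ ↦ norm_nonneg _) ((φ.integrable_one_add_norm_pow_mul k).const_mul c)
    (.of_forall fun t ↦ ?_)
  calc ‖φ t * F t‖ = ‖φ t‖ * ‖F t‖ := norm_mul _ _
    _ ≤ ‖φ t‖ * (c * (1 + ‖t‖) ^ k) := by gcongr; exact hF t
    _ = _ := by ring

theorem cutoff_preserves_band_limit_general (B : ℝ)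
    (g : ℝ → ℝ → ℂ)
    (hg_int : ∀ h ∈ Set.Ioc (0:ℝ) 1, Integrable (g h))
    (hg_L1 : ∃ C : ℝ, ∃ M : ℕ, ∀ h ∈ Set.Ioc (0:ℝ) 1, (∫ x : ℝ, ‖g h x‖) ≤ C / h ^ M)
    (hband : ∀ N : ℕ, ∃ C : ℝ, ∀ h ∈ Set.Ioc (0:ℝ) 1, ∀ ξ : ℝ, B ≤ |ξ| →
      ‖FTh h (g h) ξ‖ ≤ C * h ^ N / (1 + |ξ|) ^ N) :
    ∀ χ : SchwartzMap ℝ ℂ, ∀ B' : ℝ, B < B' → ∀ N : ℕ, ∃ C' : ℝ,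
      ∀ h ∈ Set.Ioc (0:ℝ) 1, ∀ ξ : ℝ, B' ≤ |ξ| →
        ‖FTh h (fun x => χ x * g h x) ξ‖ ≤ C' * h ^ N / (1 + |ξ|) ^ N := by
  intro χ B' hBB' N
  obtain ⟨C₂, M, hL1⟩ := hg_L1
  obtain ⟨C₁, hC₁⟩ := hband N
  set A := |C₁| * (1 + 2 * π) ^ N +
    |C₂| * (2 * π / (B' - B)) ^ (N + M) * ((1 + 2 * π) * (1 + |B|)) ^ N
  refine ⟨A * ∫ t, (1 + ‖t‖) ^ (2 * N + M) * ‖𝓕 χ t‖, fun h hh ξ hξ ↦ ?_⟩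
  rw [FTh_schwartz_mul_eq_integral χ (hg_int h hh) hh.1.ne']
  calc _ ≤ A * (h ^ N / (1 + |ξ|) ^ N) * ∫ t, (1 + ‖t‖) ^ (2 * N + M) * ‖𝓕 χ t‖ :=
        (𝓕 χ).norm_integral_mul_le <| norm_apply_sub_le_of_band_bounds hh hBB' hξ (hC₁ h hh)
          fun η ↦ (norm_FTh_le h (g h) η).trans (hL1 h hh)
    _ = _ := by ring

/-- Multiplication by a smooth cutoff does not increase the semiclassical band
limit: if `(g_h)` is a family of integrable functions with polynomially bounded
`L¹` norms whose semiclassical Fourier transforms are `O(h^∞(1+|ξ|)^{−∞})` for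
`|ξ| ≥ B`, then for any Schwartz `χ` and any `B′ > B`, the semiclassical
Fourier transforms of `χ g_h` are `O(h^∞(1+|ξ|)^{−∞})` for `|ξ| ≥ B′`. -/
theorem cutoff_preserves_band_limit (B : ℝ) (hB : 0 ≤ B)
    (g : ℝ → ℝ → ℂ)
    (hg_int : ∀ h ∈ Set.Ioc (0:ℝ) 1, Integrable (g h))
    (hg_L1 : ∃ C : ℝ, ∃ M : ℕ, ∀ h ∈ Set.Ioc (0:ℝ) 1, (∫ x : ℝ, ‖g h x‖) ≤ C / h ^ M)
    (hband : ∀ N : ℕ, ∃ C : ℝ, ∀ h ∈ Set.Ioc (0:ℝ) 1, ∀ ξ : ℝ, B ≤ |ξ| →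
      ‖FTh h (g h) ξ‖ ≤ C * h ^ N / (1 + |ξ|) ^ N) :
    ∀ χ : SchwartzMap ℝ ℂ, ∀ B' : ℝ, B < B' → ∀ N : ℕ, ∃ C' : ℝ,
      ∀ h ∈ Set.Ioc (0:ℝ) 1, ∀ ξ : ℝ, B' ≤ |ξ| →
        ‖FTh h (fun x => χ x * g h x) ξ‖ ≤ C' * h ^ N / (1 + |ξ|) ^ N :=
  cutoff_preserves_band_limit_general B g hg_int hg_L1 hband
end
end
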